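/- For every i ∈ {1,2,3} and j ∈ {1,…,6}, the chamber C(i,j) = {t ∈ ℝ⁶ : f_i(t) ≤ f_p(t) for all p, g_j(t) ≥ g_q(t) for all q, f_i(t) ≥ g_j(t)} equals the solution set of the following six linear inequalities (indices of f taken modulo 3 in {1,2,3}, indices of g modulo 6 in {1,…,6}): f_{i+1}(t) ≥ f_i(t), f_{i+2}(t) ≥ f_i(t), g_{j+2}(t) ≤ g_j(t), g_{j+3}(t) ≤ g_j(t), g_{j+4}(t) ≤ g_j(t), and f_i(t) ≥ g_j(t). In particular each chamber is a simplicial cone in ℝ⁶. -/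

import Mathlib

/-- coordinates on ℝ⁶ are `(ℓ₁,ℓ₂,m₁,m₂,n₁,n₂)`, indexed `0,…,5`. -/
noncomputable def ω (t : Fin 6 → ℝ) : ℝ := (t 0 + t 2 + t 4 - t 1 - t 3 - t 5) / 3

/-- the linear forms `f₁, f₂, f₃`. -/
noncomputable def f : Fin 3 → (Fin 6 → ℝ) → ℝ :=
  ![fun _ => 0, fun t => t 0 - t 3 - ω t, fun t => t 1 - t 4 + ω t]

/-- the linear forms `g₁, …, g₆`. -/
noncomputable def g : Fin 6 → (Fin 6 → ℝ) → ℝ :=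
  ![fun t => -t 3, fun t => -t 4, fun t => t 0 - t 3 - t 5 - ω t,
    fun t => -t 3 - ω t, fun t => -t 4 + ω t, fun t => t 1 - t 2 - t 4 + ω t]

open Fin.NatCast in
lemma finmk16 {n k : ℕ} [NeZero n] (h : k < n) : (⟨k, h⟩ : Fin n) = (k : Fin n) := by
  simp [Fin.ext_iff, Nat.mod_eq_of_lt h]

lemma vec6_five16 {α : Type*} (a b c d e f' : α) : (![a,b,c,d,e,f'] : Fin 6 → α) 5 = f' := rfl

theorem stmt16 (i : Fin 3) (j : Fin 6) :
    {t : Fin 6 → ℝ |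
      (∀ p : Fin 3, f i t ≤ f p t) ∧ (∀ q : Fin 6, g q t ≤ g j t) ∧ g j t ≤ f i t} =
    {t : Fin 6 → ℝ |
      f i t ≤ f (i + 1) t ∧ f i t ≤ f (i + 2) t ∧
      g (j + 2) t ≤ g j t ∧ g (j + 3) t ≤ g j t ∧ g (j + 4) t ≤ g j t ∧
      g j t ≤ f i t} := by
  ext t
  simp only [Set.mem_setOf_eq]
  constructor
  · rintro ⟨hf, hg, h⟩
    exact ⟨hf _, hf _, hg _, hg _, hg _, h⟩
  · rintro ⟨h1, h2, h3, h4, h5, h6⟩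
    refine ⟨fun p => ?_, fun q => ?_, h6⟩
    · fin_cases i <;> fin_cases p <;>
        simp only [Fin.zero_eta, Fin.mk_one, Fin.reduceFinMk, Nat.cast_ofNat, Nat.cast_zero, Nat.cast_one, Fin.reduceAdd,
          Fin.isValue, f, ω, Matrix.cons_val_zero, Matrix.cons_val_one, Matrix.head_cons,
          Matrix.cons_val_two, Matrix.tail_cons] at h1 h2 ⊢ <;> linarith
    · fin_cases j <;> fin_cases q <;>
        simp only [Fin.zero_eta, Fin.mk_one, Fin.reduceFinMk, Nat.cast_ofNat, Nat.cast_zero, Nat.cast_one, Fin.reduceAdd,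
          Fin.isValue, g, ω, vec6_five16, Matrix.cons_val_zero, Matrix.cons_val_one,
          Matrix.head_cons, Matrix.cons_val_two, Matrix.tail_cons, Matrix.cons_val_three,
          Matrix.cons_val_four] at h3 h4 h5 ⊢ <;> linarith
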